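/- For every complex m×n matrix A and vectors x ∈ ℂⁿ, y ∈ ℂᵐ, one has |⟨Ax, y⟩| ≤ 16·‖x‖_∞·‖y‖_∞·‖A‖_□·m·n. -/

import Mathlib

/-!
Subset sums of `A` are bounded by `K = ‖A‖_□ m n`. If every subset sum of a family `w` has norm
at most `B`, then `∑ uᵢ wᵢ` has norm at most `4 c B` whenever `|uᵢ| ≤ c`: for real `uᵢ ∈ [0, c]`
the sum is a convex function of `u`, maximized at the vertices `c · 1_t` of the box; real
coefficients split into positive and negative parts, complex ones into real and imaginary parts.
Applied to the column sums of `A` over a row set this bounds the subset sums of `A x` by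
`4 ‖x‖ K`, and applied once more to `A x` with the coefficients `conj yᵢ` it gives `16 ‖x‖ ‖y‖ K`.
-/

open Matrix Finset

/-- The cut-norm of a complex `m × n` matrix:
`max_{X ⊆ [m], Y ⊆ [n]} |Σ(A[X,Y])| / (mn)`. -/
noncomputable def cutNorm {m n : ℕ} (A : Matrix (Fin m) (Fin n) ℂ) : ℝ :=
  Finset.univ.sup' Finset.univ_nonempty
    (fun p : Finset (Fin m) × Finset (Fin n) =>
      ‖∑ i ∈ p.1, ∑ j ∈ p.2, A i j‖ / (m * n))

open Set in
lemma norm_add_smul_le_max {E : Type*} [SeminormedAddCommGroup E] [NormedSpace ℝ E]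
    {c u : ℝ} (hu : u ∈ Icc 0 c) (z w : E) :
    ‖z + u • w‖ ≤ max ‖z‖ ‖z + c • w‖ := by
  have hseg : z + u • w ∈ segment ℝ z (z + c • w) := by
    have h := image_segment ℝ (AffineMap.lineMap z (z + w)) 0 c
    simp only [AffineMap.lineMap_apply_module', add_sub_cancel_left, zero_smul, zero_add] at h
    rw [add_comm z (c • w), ← h, segment_eq_Icc (hu.1.trans hu.2)]
    exact ⟨u, hu, by rw [AffineMap.lineMap_apply_module', add_sub_cancel_left, add_comm]⟩
  simpa using (convexOn_norm convex_univ).le_on_segment (mem_univ _) (mem_univ _) hseg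

section RealCoefficients

variable {ι E : Type*} [SeminormedAddCommGroup E] [NormedSpace ℝ E] {c B : ℝ}

/-- Since the norm is convex along each coordinate direction, every coefficient can be pushed
to an endpoint of `[0, c]`. -/
lemma exists_subset_norm_add_sum_smul_le (s : Finset ι) {u : ι → ℝ}
    (hu : ∀ i ∈ s, u i ∈ Set.Icc 0 c) (w : ι → E) (z : E) :
    ∃ t ⊆ s, ‖z + ∑ i ∈ s, u i • w i‖ ≤ ‖z + c • ∑ i ∈ t, w i‖ := by
  induction s using Finset.cons_induction generalizing z with
  | empty => exact ⟨∅, subset_rfl, by simp⟩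
  | cons a s ha ih =>
    have hus : ∀ i ∈ s, u i ∈ Set.Icc 0 c := fun i hi => hu i (mem_cons_of_mem hi)
    have hmax := norm_add_smul_le_max (hu a (mem_cons_self a s)) (z + ∑ i ∈ s, u i • w i) (w a)
    rw [sum_cons, add_left_comm, add_comm (u a • w a)]
    rcases le_max_iff.mp hmax with h | h
    · obtain ⟨t, hts, hle⟩ := ih hus z
      exact ⟨t, hts.trans (subset_cons ha), h.trans hle⟩
    · obtain ⟨t, hts, hle⟩ := ih hus (z + c • w a)
      refine ⟨cons a t fun hat => ha (hts hat), cons_subset_cons.mpr hts, ?_⟩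
      rw [sum_cons, smul_add, ← add_assoc]
      exact h.trans (by rwa [add_right_comm z])

variable {s : Finset ι} {u : ι → ℝ} {w : ι → E}

lemma norm_sum_smul_le_of_mem_Icc (hc : 0 ≤ c) (hu : ∀ i ∈ s, u i ∈ Set.Icc 0 c)
    (hB : ∀ t ⊆ s, ‖∑ i ∈ t, w i‖ ≤ B) : ‖∑ i ∈ s, u i • w i‖ ≤ c * B := by
  obtain ⟨t, hts, hle⟩ := exists_subset_norm_add_sum_smul_le s hu w 0
  calc ‖∑ i ∈ s, u i • w i‖ ≤ ‖c • ∑ i ∈ t, w i‖ := by simpa using hle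
    _ = c * ‖∑ i ∈ t, w i‖ := by rw [norm_smul, Real.norm_of_nonneg hc]
    _ ≤ c * B := mul_le_mul_of_nonneg_left (hB t hts) hc

lemma norm_sum_smul_le_of_abs_le (hc : 0 ≤ c) (hu : ∀ i ∈ s, |u i| ≤ c)
    (hB : ∀ t ⊆ s, ‖∑ i ∈ t, w i‖ ≤ B) : ‖∑ i ∈ s, u i • w i‖ ≤ 2 * c * B := by
  have hpos : ‖∑ i ∈ s, (u i)⁺ • w i‖ ≤ c * B :=
    norm_sum_smul_le_of_mem_Icc hc (fun i hi =>
      ⟨posPart_nonneg _, sup_le (le_of_abs_le (hu i hi)) hc⟩) hB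
  have hneg : ‖∑ i ∈ s, (u i)⁻ • w i‖ ≤ c * B :=
    norm_sum_smul_le_of_mem_Icc hc (fun i hi =>
      ⟨negPart_nonneg _, sup_le (neg_le.mpr (abs_le.mp (hu i hi)).1) hc⟩) hB
  have hsplit : ∑ i ∈ s, u i • w i = ∑ i ∈ s, (u i)⁺ • w i - ∑ i ∈ s, (u i)⁻ • w i := by
    simp only [← sum_sub_distrib, ← sub_smul, posPart_sub_negPart]
  calc ‖∑ i ∈ s, u i • w i‖
      ≤ ‖∑ i ∈ s, (u i)⁺ • w i‖ + ‖∑ i ∈ s, (u i)⁻ • w i‖ := hsplit ▸ norm_sub_le _ _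
    _ ≤ 2 * c * B := by linarith

end RealCoefficients

lemma norm_sum_smul_le_of_norm_le {ι E : Type*} [SeminormedAddCommGroup E] [NormedSpace ℂ E]
    {c B : ℝ} {s : Finset ι} {u : ι → ℂ} {w : ι → E} (hc : 0 ≤ c) (hu : ∀ i ∈ s, ‖u i‖ ≤ c)
    (hB : ∀ t ⊆ s, ‖∑ i ∈ t, w i‖ ≤ B) : ‖∑ i ∈ s, u i • w i‖ ≤ 4 * c * B := by
  have hre := norm_sum_smul_le_of_abs_le hc
    (fun i hi => (Complex.abs_re_le_norm (u i)).trans (hu i hi)) hB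
  have him := norm_sum_smul_le_of_abs_le hc
    (fun i hi => (Complex.abs_im_le_norm (u i)).trans (hu i hi)) hB
  have hsplit : ∑ i ∈ s, u i • w i =
      ∑ i ∈ s, (u i).re • w i + Complex.I • ∑ i ∈ s, (u i).im • w i := by
    rw [smul_sum, ← sum_add_distrib]
    refine sum_congr rfl fun i _ => ?_
    conv_lhs => rw [← Complex.re_add_im (u i)]
    rw [add_smul, mul_comm, mul_smul, Complex.coe_smul, Complex.coe_smul]
  calc ‖∑ i ∈ s, u i • w i‖
      ≤ ‖∑ i ∈ s, (u i).re • w i‖ + ‖Complex.I • ∑ i ∈ s, (u i).im • w i‖ :=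
        hsplit ▸ norm_add_le _ _
    _ = ‖∑ i ∈ s, (u i).re • w i‖ + ‖∑ i ∈ s, (u i).im • w i‖ := by
        rw [norm_smul, Complex.norm_I, one_mul]
    _ ≤ 4 * c * B := by linarith

lemma norm_sum_sum_le_cutNorm_mul {m n : ℕ} (A : Matrix (Fin m) (Fin n) ℂ)
    (S : Finset (Fin m)) (T : Finset (Fin n)) :
    ‖∑ i ∈ S, ∑ j ∈ T, A i j‖ ≤ cutNorm A * m * n := by
  rcases Nat.eq_zero_or_pos (m * n) with hmn | hmn
  · obtain rfl | rfl := mul_eq_zero.mp hmn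
    · simp [eq_empty_of_isEmpty S]
    · simp [eq_empty_of_isEmpty T]
  · have hle : ‖∑ i ∈ S, ∑ j ∈ T, A i j‖ / (m * n) ≤ cutNorm A :=
      le_sup' (fun p : Finset (Fin m) × Finset (Fin n) =>
        ‖∑ i ∈ p.1, ∑ j ∈ p.2, A i j‖ / (m * n)) (mem_univ (S, T))
    rwa [div_le_iff₀ (by exact_mod_cast hmn), ← mul_assoc] at hle

lemma norm_sum_mulVec_le_cutNorm_mul {m n : ℕ} (A : Matrix (Fin m) (Fin n) ℂ)
    (x : Fin n → ℂ) (S : Finset (Fin m)) :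
    ‖∑ i ∈ S, (A *ᵥ x) i‖ ≤ 4 * ‖x‖ * (cutNorm A * m * n) := by
  have hcols : ∑ i ∈ S, (A *ᵥ x) i = ∑ j, x j • ∑ i ∈ S, A i j := by
    simp only [mulVec, dotProduct, smul_eq_mul, mul_sum]
    rw [sum_comm]
    exact sum_congr rfl fun j _ => sum_congr rfl fun i _ => mul_comm _ _
  rw [hcols]
  refine norm_sum_smul_le_of_norm_le (norm_nonneg x) (fun j _ => norm_le_pi_norm x j) ?_
  intro T _
  rw [sum_comm]
  exact norm_sum_sum_le_cutNorm_mul A S T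

/-- For a complex `m × n` matrix `A` and complex vectors `x`, `y`,
`|⟨Ax, y⟩| ≤ 16 ‖x‖_∞ ‖y‖_∞ ‖A‖_□ m n`, where `⟨·,·⟩` is the Hermitian
inner product.  (The norm on `Fin k → ℂ` is the sup-norm.) -/
theorem abs_inner_mulVec_le_sixteen_cutNorm {m n : ℕ} (A : Matrix (Fin m) (Fin n) ℂ)
    (x : Fin n → ℂ) (y : Fin m → ℂ) :
    ‖∑ i, (starRingEnd ℂ) (y i) * A.mulVec x i‖ ≤
      16 * ‖x‖ * ‖y‖ * cutNorm A * m * n := by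
  have hy : ∀ i ∈ univ, ‖(starRingEnd ℂ) (y i)‖ ≤ ‖y‖ := fun i _ => by
    rw [Complex.norm_conj]; exact norm_le_pi_norm y i
  calc ‖∑ i, (starRingEnd ℂ) (y i) * A.mulVec x i‖
      ≤ 4 * ‖y‖ * (4 * ‖x‖ * (cutNorm A * m * n)) :=
        norm_sum_smul_le_of_norm_le (norm_nonneg y) hy
          fun S _ => norm_sum_mulVec_le_cutNorm_mul A x S
    _ = 16 * ‖x‖ * ‖y‖ * cutNorm A * m * n := by ring
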